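/- The μ-function satisfies the inversion symmetry μ(x^{−1}, y^{−1}; q) = μ(x, y; q) for x, y ∉ q^ℤ. -/

import Mathlib

/-- `e(z) = exp(2πiz)`. -/
noncomputable def ee (z : ℂ) : ℂ := Complex.exp (2 * (Real.pi : ℂ) * Complex.I * z)

/-- Jacobi theta function `θ_q(z) = ∑' n : ℤ, z ^ n * q ^ (n*(n-1)/2)`. -/
noncomputable def thetaQ (q z : ℂ) : ℂ :=
  ∑' n : ℤ, z ^ n * q ^ (n * (n - 1) / 2)

/-- Zwegers' μ-function in the coordinates `q = e(τ)`, `x = e(u)`, `y = e(v)`: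
`μ(x,y;q) = i q^{-1/8} √(xy) / θ_q(-y) · ∑_{n∈ℤ} (-1)^n y^n q^{n(n+1)/2}/(1 - x q^n)`,
with `q^{-1/8} = e(-τ/8)` and `√(xy) = e((u+v)/2)`. -/
noncomputable def zmu (τ u v : ℂ) : ℂ :=
  Complex.I * ee (-τ / 8) * ee ((u + v) / 2) / thetaQ (ee τ) (-(ee v)) *
    ∑' n : ℤ, (-1) ^ n * (ee v) ^ n * (ee τ) ^ (n * (n + 1) / 2) / (1 - ee u * (ee τ) ^ n)

lemma ee_ne_zero (z : ℂ) : ee z ≠ 0 := Complex.exp_ne_zero _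

lemma ee_neg (z : ℂ) : ee (-z) = (ee z)⁻¹ := by
  rw [ee, ee, ← Complex.exp_neg]; ring_nf

lemma ee_add (a b : ℂ) : ee (a + b) = ee a * ee b := by
  rw [ee, ee, ee, ← Complex.exp_add]; ring_nf

/-- `θ_q(z⁻¹) = z⁻¹ θ_q(z)` by reindexing `n ↦ 1 - n`. -/
lemma thetaQ_inv (q z : ℂ) (hz : z ≠ 0) :
    thetaQ q z⁻¹ = z⁻¹ * thetaQ q z := by
  unfold thetaQ
  rw [← ((Equiv.subLeft (1 : ℤ)).tsum_eq
      (fun n : ℤ => (z⁻¹) ^ n * q ^ (n * (n - 1) / 2))), ← tsum_mul_left]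
  congr 1; funext n
  have h1 : (Equiv.subLeft (1 : ℤ)) n = 1 - n := rfl
  have h2 : (1 - n) * ((1 - n) - 1) / 2 = n * (n - 1) / 2 := by
    have : (1 - n) * ((1 - n) - 1) = n * (n - 1) := by ring
    rw [this]
  rw [h1, h2]
  have h3 : (z⁻¹) ^ (1 - n) = z⁻¹ * z ^ n := by
    rw [inv_zpow, ← zpow_neg, neg_sub, zpow_sub₀ hz, zpow_one]
    field_simp
  rw [h3]; ring

/-- The term-wise identity for the sum, at index `-n` vs `n`. -/
lemma sum_term (x y q : ℂ) (hx : x ≠ 0) (hy : y ≠ 0) (hq : q ≠ 0) (n : ℤ)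
    (hden : 1 - x * q ^ n ≠ 0) :
    (-1 : ℂ) ^ (-n) * (y⁻¹) ^ (-n) * q ^ ((-n) * ((-n) + 1) / 2) / (1 - x⁻¹ * q ^ (-n)) =
      (-x) * ((-1 : ℂ) ^ n * y ^ n * q ^ (n * (n + 1) / 2) / (1 - x * q ^ n)) := by
  have hQ : q ^ n ≠ 0 := zpow_ne_zero _ hq
  have h1 : ((-1 : ℂ)) ^ (-n) = (-1 : ℂ) ^ n := by
    rw [zpow_neg, ← inv_zpow, inv_neg, inv_one]
  have h2 : (y⁻¹) ^ (-n) = y ^ n := by rw [inv_zpow, ← zpow_neg, neg_neg]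
  have h3 : (-n) * ((-n) + 1) / 2 = n * (n - 1) / 2 := by
    have : (-n) * ((-n) + 1) = n * (n - 1) := by ring
    rw [this]
  have h4 : q ^ (n * (n + 1) / 2) = q ^ (n * (n - 1) / 2) * q ^ n := by
    rw [← zpow_add₀ hq]
    congr 1
    rw [show n * (n + 1) = n * (n - 1) + n * 2 by ring,
      Int.add_mul_ediv_right _ _ (by norm_num : (2:ℤ) ≠ 0)]
  have h5 : 1 - x⁻¹ * q ^ (-n) = -(x⁻¹ * (q ^ n)⁻¹) * (1 - x * q ^ n) := by
    rw [zpow_neg]; field_simp; ring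
  have hden2 : (-1 : ℂ) + x * q ^ n ≠ 0 := by
    intro h; apply hden; linear_combination -h
  have h6 : x * q ^ n - 1 ≠ 0 := by
    intro h; apply hden; linear_combination -h
  rw [h1, h2, h3, h4, h5]
  field_simp

/-- Inversion symmetry of the μ-function: `μ(x⁻¹, y⁻¹; q) = μ(x, y; q)`. -/
theorem zmu_inv (τ u v : ℂ) (hτ : 0 < τ.im)
    (hu : ∀ n : ℤ, ee u ≠ (ee τ) ^ n) (hv : ∀ n : ℤ, ee v ≠ (ee τ) ^ n) :
    zmu τ (-u) (-v) = zmu τ u v := by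
  set q := ee τ with hqdef
  set x := ee u with hxdef
  set y := ee v with hydef
  have hx : x ≠ 0 := ee_ne_zero u
  have hy : y ≠ 0 := ee_ne_zero v
  have hq : q ≠ 0 := ee_ne_zero τ
  have hden : ∀ n : ℤ, 1 - x * q ^ n ≠ 0 := by
    intro n h
    apply hu (-n)
    rw [zpow_neg]
    exact eq_inv_of_mul_eq_one_left (by linear_combination -h)
  -- the theta factor
  have hθ : thetaQ q (-(ee (-v))) = (-y)⁻¹ * thetaQ q (-y) := by
    rw [ee_neg, ← hydef, ← inv_neg, thetaQ_inv q (-y) (neg_ne_zero.mpr hy)]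
  -- the sum factor
  have hS : (∑' n : ℤ, (-1 : ℂ) ^ n * (ee (-v)) ^ n * q ^ (n * (n + 1) / 2) /
        (1 - ee (-u) * q ^ n)) =
      (-x) * ∑' n : ℤ, (-1 : ℂ) ^ n * y ^ n * q ^ (n * (n + 1) / 2) / (1 - x * q ^ n) := by
    rw [← ((Equiv.neg ℤ).tsum_eq (fun n : ℤ =>
        (-1 : ℂ) ^ n * (ee (-v)) ^ n * q ^ (n * (n + 1) / 2) / (1 - ee (-u) * q ^ n))),
      ← tsum_mul_left]
    congr 1; funext n
    have he : (Equiv.neg ℤ) n = -n := rfl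
    rw [he, ee_neg, ee_neg, ← hxdef, ← hydef]
    exact sum_term x y q hx hy hq n (hden n)
  -- the prefactor exponential
  have hB : ee ((-u + -v) / 2) = (ee ((u + v) / 2))⁻¹ := by
    rw [show (-u + -v) / 2 = -((u + v) / 2) by ring, ee_neg]
  have hB2 : ee ((u + v) / 2) * ee ((u + v) / 2) = x * y := by
    rw [← ee_add, hxdef, hydef, ← ee_add]
    congr 1; ring
  unfold zmu
  rw [hθ, hS, hB]
  rcases eq_or_ne (thetaQ q (-y)) 0 with h0 | h0
  · simp [show thetaQ q (-ee v) = 0 from h0, h0, ← hqdef]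
  · have hBne : ee ((u + v) / 2) ≠ 0 := ee_ne_zero _
    rw [← hqdef, ← hxdef, ← hydef]
    field_simp
    linear_combination (-ee (-(τ / 8)) *
      (∑' (n : ℤ), (-1 : ℂ) ^ n * y ^ n * q ^ (n * (n + 1) / 2) / (1 - x * q ^ n))) * hB2
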